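/- arXiv:1708.04075 — 3 statements merged into one kernel-verified Lean document; each statement's English description precedes it below -/
import Mathlib

section
/- Let f ∈ ℝ[X₁,…,Xₙ] be a nonzero polynomial with f(0) = 0 and ∇f(0) = 0. Then every neighborhood of the origin in ℝⁿ contains infinitely many points of Γ_ℝ(f) \ Crit_ℝ(f); in particular 0 is an accumulation point of Γ_ℝ(f) \ Crit_ℝ(f). -/
open MvPolynomial Metric Set

noncomputable section

/-- The gradient of a real polynomial `f`, as a map on `ℝⁿ`. -/
def grad {n : ℕ} (f : MvPolynomial (Fin n) ℝ) (x : EuclideanSpace ℝ (Fin n)) :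
    EuclideanSpace ℝ (Fin n) :=
  WithLp.toLp 2 (fun i => eval (fun j => x j) (pderiv i f))

/-- Evaluation of a polynomial as a function on `ℝⁿ`. -/
def evalP {n : ℕ} (f : MvPolynomial (Fin n) ℝ) (x : EuclideanSpace ℝ (Fin n)) : ℝ :=
  eval (fun j => x j) f

/-- The tangency variety `Γ_ℝ(f) = {x | ∃ λ, ∇f(x) = λ x}`. -/
def Gamma {n : ℕ} (f : MvPolynomial (Fin n) ℝ) : Set (EuclideanSpace ℝ (Fin n)) :=
  {x | ∃ l : ℝ, grad f x = l • x}

/-- The set of real critical points `Crit_ℝ(f) = {x | ∇f(x) = 0}`. -/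
def Crit {n : ℕ} (f : MvPolynomial (Fin n) ℝ) : Set (EuclideanSpace ℝ (Fin n)) :=
  {x | grad f x = 0}

/-!
Maximize `ψ x = f(x)² / ‖x‖²` over a small closed ball `B`: since `f(x) = o(‖x‖)`, `ψ` is
continuous with `ψ 0 = 0`, and it is positive somewhere on `B` because `f` does not vanish
identically near `0`. At a maximizer `z ≠ 0` the function `Φ = f² - ψ(z) ‖·‖²` attains its
maximum `0` over `B`. Lagrange multipliers for `Φ` on the sphere through `z` give `∇f(z) ∥ z`,
and moving from `z` towards the origin gives `f(z) ⟪∇f(z), z⟫ ≥ f(z)² > 0`, so `∇f(z) ≠ 0`.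
-/

open Filter Topology
open scoped RealInnerProductSpace

section Tangency

variable {E : Type*} [NormedAddCommGroup E] [InnerProductSpace ℝ E]

lemma exists_eq_smul_of_isLocalExtrOn_sphere [CompleteSpace E] {φ : E → ℝ} {w z : E}
    (hextr : IsLocalExtrOn φ (sphere 0 ‖z‖) z) (hφ : HasStrictFDerivAt φ (innerSL ℝ w) z)
    (hz : z ≠ 0) : ∃ l : ℝ, w = l • z := by
  have hextr' : IsLocalExtrOn φ {x | ‖x‖ ^ 2 = ‖z‖ ^ 2} z := by
    convert hextr using 2
    ext x
    simp
  obtain ⟨a, b, hab, h⟩ :=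
    hextr'.exists_multipliers_of_hasStrictFDerivAt_1d (hasStrictFDerivAt_norm_sq z) hφ
  have hcomb : (2 * a) • z + b • w = 0 := by
    refine ext_inner_right ℝ fun v => ?_
    have hv := congrArg (· v) h
    simp only [add_apply, smul_apply, zero_apply, innerSL_apply_apply, smul_eq_mul,
      nsmul_eq_mul, Nat.cast_ofNat] at hv
    simp only [inner_add_left, real_inner_smul_left, inner_zero_left]
    linear_combination hv
  have hb : b ≠ 0 := by
    rintro rfl
    have ha : a ≠ 0 := by rintro rfl; exact hab rfl
    simp [ha, hz] at hcomb
  refine ⟨-(2 * a) / b, ?_⟩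
  rw [div_eq_inv_mul, mul_smul, neg_smul, ← eq_neg_of_add_eq_zero_right hcomb, inv_smul_smul₀ hb]

lemma IsMaxOn.inner_nonneg_of_hasFDerivAt {φ : E → ℝ} {w z : E} {s : Set E} (hs : Convex ℝ s)
    (h0 : 0 ∈ s) (hz : z ∈ s) (hmax : IsMaxOn φ s z) (hφ : HasFDerivAt φ (innerSL ℝ w) z) :
    0 ≤ ⟪w, z⟫ := by
  have hcone : 0 - z ∈ posTangentConeAt s z :=
    sub_mem_posTangentConeAt_of_segment_subset (hs.segment_subset hz h0)
  simpa using hmax.localize.hasFDerivWithinAt_nonpos hφ.hasFDerivWithinAt hcone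

lemma exists_eq_smul_and_ne_zero_of_isMaxOn_closedBall [CompleteSpace E] {g : E → ℝ} {g' z : E}
    {T ε : ℝ} (hg : HasStrictFDerivAt g (innerSL ℝ g') z) (hz : z ∈ closedBall 0 ε)
    (hz0 : z ≠ 0) (hgz : g z ≠ 0) (hT : g z ^ 2 = T * ‖z‖ ^ 2)
    (hmax : IsMaxOn (fun x => g x ^ 2 - T * ‖x‖ ^ 2) (closedBall 0 ε) z) :
    (∃ l : ℝ, g' = l • z) ∧ g' ≠ 0 := by
  have hΦ : HasStrictFDerivAt (fun x => g x ^ 2 - T * ‖x‖ ^ 2)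
      (innerSL ℝ ((2 * g z) • g' - (2 * T) • z)) z := by
    refine ((hg.pow 2).sub ((hasStrictFDerivAt_norm_sq z).const_mul T)).congr_fderiv ?_
    ext v
    simp only [Nat.add_one_sub_one, pow_one, nsmul_eq_mul, Nat.cast_ofNat, sub_apply, smul_apply,
      coe_innerSL_apply, smul_eq_mul, map_sub, map_smul, sub_right_inj]
    ring
  have hsphere : sphere 0 ‖z‖ ⊆ closedBall (0 : E) ε :=
    sphere_subset_closedBall.trans (closedBall_subset_closedBall (mem_closedBall_zero_iff.1 hz))
  obtain ⟨l, hl⟩ := exists_eq_smul_of_isLocalExtrOn_sphere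
    (Or.inr (hmax.on_subset hsphere).localize) hΦ hz0
  have hinner := hmax.inner_nonneg_of_hasFDerivAt (convex_closedBall 0 ε)
    (mem_closedBall_self (dist_nonneg.trans hz)) hz hΦ.hasFDerivAt
  refine ⟨⟨(l + 2 * T) / (2 * g z), ?_⟩, ?_⟩
  · rw [sub_eq_iff_eq_add] at hl
    rw [div_eq_inv_mul, mul_smul, add_smul, ← hl, inv_smul_smul₀ (by simpa using hgz)]
  · rintro rfl
    rw [smul_zero, zero_sub, inner_neg_left, real_inner_smul_left, real_inner_self_eq_norm_sq,
      mul_assoc, ← hT] at hinner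
    have : 0 < g z ^ 2 := by positivity
    linarith

lemma continuous_sq_div_norm_sq {g : E → ℝ} (hg : Continuous g) (hg0 : g 0 = 0)
    (hdg0 : HasFDerivAt g (0 : E →L[ℝ] ℝ) 0) : Continuous fun x => g x ^ 2 / ‖x‖ ^ 2 := by
  refine continuous_iff_continuousAt.2 fun x => ?_
  rcases eq_or_ne x 0 with rfl | hx
  · -- the quotient takes the junk value `0 / 0 = 0` at the origin
    have hlittle : g =o[𝓝 0] fun x => ‖x‖ := by
      simpa [hg0] using hdg0.isLittleO.norm_right
    have := hlittle.tendsto_div_nhds_zero.pow 2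
    simpa [ContinuousAt, hg0, div_pow] using this
  · exact (hg.continuousAt.pow 2).div (continuous_norm.continuousAt.pow 2) (by positivity)

theorem accPt_tangency_of_hasStrictFDerivAt [FiniteDimensional ℝ E] {g : E → ℝ} {g' : E → E}
    (hg : ∀ x, HasStrictFDerivAt g (innerSL ℝ (g' x)) x) (hg0 : g 0 = 0) (hg'0 : g' 0 = 0)
    (hfreq : ∃ᶠ x in 𝓝 0, g x ≠ 0) :
    AccPt 0 (𝓟 {x | (∃ l : ℝ, g' x = l • x) ∧ g' x ≠ 0}) := by
  rw [accPt_iff_frequently, Metric.nhds_basis_closedBall.frequently_iff]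
  intro ε hε
  set ψ : E → ℝ := fun x => g x ^ 2 / ‖x‖ ^ 2 with hψ_def
  have hψ : Continuous ψ := continuous_sq_div_norm_sq
    (continuous_iff_continuousAt.2 fun x => (hg x).continuousAt) hg0
    (by simpa [hg'0] using (hg 0).hasFDerivAt)
  obtain ⟨z, hz, hmax⟩ := (isCompact_closedBall (0 : E) ε).exists_isMaxOn
    (nonempty_closedBall.2 hε.le) hψ.continuousOn
  obtain ⟨p, hp, hgp⟩ := Metric.nhds_basis_closedBall.frequently_iff.1 hfreq ε hε
  have hp0 : p ≠ 0 := by rintro rfl; exact hgp hg0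
  have hψz : 0 < ψ z := (show 0 < ψ p by positivity).trans_le (hmax hp)
  have hz0 : z ≠ 0 := by rintro rfl; simp [hψ_def] at hψz
  have hgz : g z ≠ 0 := by intro h; simp [hψ_def, h] at hψz
  have hsq : ∀ x, g x ^ 2 = ψ x * ‖x‖ ^ 2 := by
    intro x
    rcases eq_or_ne x 0 with rfl | hx
    · simp [hg0]
    · exact (div_mul_cancel₀ _ (by positivity)).symm
  refine ⟨z, hz, hz0, exists_eq_smul_and_ne_zero_of_isMaxOn_closedBall (hg z) hz hz0 hgz (hsq z) ?_⟩
  intro x hx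
  show g x ^ 2 - ψ z * ‖x‖ ^ 2 ≤ g z ^ 2 - ψ z * ‖z‖ ^ 2
  rw [hsq x, hsq z, sub_self, ← sub_mul]
  exact mul_nonpos_of_nonpos_of_nonneg (sub_nonpos.2 (hmax hx)) (by positivity)

end Tangency

section Polynomial

variable {n : ℕ}

lemma evalP_C (a : ℝ) (x : EuclideanSpace ℝ (Fin n)) : evalP (C a) x = a := eval_C a

lemma evalP_add (p q : MvPolynomial (Fin n) ℝ) (x : EuclideanSpace ℝ (Fin n)) :
    evalP (p + q) x = evalP p x + evalP q x := map_add _ p q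

lemma evalP_mul_X (p : MvPolynomial (Fin n) ℝ) (i : Fin n)
    (x : EuclideanSpace ℝ (Fin n)) : evalP (p * X i) x = evalP p x * x i := by
  simp [evalP]

lemma grad_C (a : ℝ) (x : EuclideanSpace ℝ (Fin n)) : grad (C a) x = 0 := by
  ext i
  simp [grad]

lemma grad_add (p q : MvPolynomial (Fin n) ℝ) (x : EuclideanSpace ℝ (Fin n)) :
    grad (p + q) x = grad p x + grad q x := by
  ext i
  simp [grad]

lemma grad_mul_X (p : MvPolynomial (Fin n) ℝ) (i : Fin n) (x : EuclideanSpace ℝ (Fin n)) :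
    grad (p * X i) x = x i • grad p x + evalP p x • EuclideanSpace.single i 1 := by
  ext j
  rcases eq_or_ne i j with rfl | hij
  · simp [grad, evalP]
    ring
  · simp [grad, evalP, hij]

lemma hasStrictFDerivAt_evalP (f : MvPolynomial (Fin n) ℝ) (x : EuclideanSpace ℝ (Fin n)) :
    HasStrictFDerivAt (evalP f) (innerSL ℝ (grad f x)) x := by
  induction f using MvPolynomial.induction_on with
  | C a =>
    rw [funext (evalP_C a), grad_C, map_zero]
    exact hasStrictFDerivAt_const a x
  | add p q hp hq =>
    rw [funext (evalP_add p q), grad_add, map_add]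
    exact hp.add hq
  | mul_X p i hp =>
    have hproj : innerSL ℝ (EuclideanSpace.single i (1 : ℝ)) = EuclideanSpace.proj i := by
      ext v
      simp [EuclideanSpace.inner_single_left]
    rw [funext (evalP_mul_X p i), grad_mul_X, map_add, map_smul, map_smul, hproj, add_comm]
    exact hp.mul (EuclideanSpace.proj (𝕜 := ℝ) i).hasStrictFDerivAt

lemma frequently_evalP_ne_zero {f : MvPolynomial (Fin n) ℝ} (hf : f ≠ 0)
    (a : EuclideanSpace ℝ (Fin n)) : ∃ᶠ x in 𝓝 a, evalP f x ≠ 0 := by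
  intro hzero
  simp only [not_not] at hzero
  have hzero_pi : ∀ᶠ y in 𝓝 (WithLp.ofLp a), eval y f = 0 :=
    (PiLp.continuous_toLp 2 _).continuousAt.eventually hzero
  obtain ⟨η, hη, hball⟩ := Metric.eventually_nhds_iff_ball.1 hzero_pi
  refine hf (funext_set (fun i => ball (a i) η) (fun i => ?_) fun y hy => ?_)
  · rw [Real.ball_eq_Ioo]
    exact Ioo_infinite (by linarith)
  · rw [map_zero]
    exact hball y (by rwa [ball_pi _ hη])

end Polynomial

/-- If `f` is a nonzero polynomial with `f(0) = 0` and `∇f(0) = 0`, then every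
neighborhood of the origin contains infinitely many points of `Γ_ℝ(f) \ Crit_ℝ(f)`;
in particular `0` is an accumulation point of `Γ_ℝ(f) \ Crit_ℝ(f)`. -/
theorem stmt3 (n : ℕ) (f : MvPolynomial (Fin n) ℝ) (hf : f ≠ 0)
    (hf0 : evalP f 0 = 0) (hgrad : grad f 0 = 0) :
    (∀ U ∈ nhds (0 : EuclideanSpace ℝ (Fin n)), (U ∩ (Gamma f \ Crit f)).Infinite) ∧
    (0 : EuclideanSpace ℝ (Fin n)) ∈ closure ((Gamma f \ Crit f) \ {0}) := by
  have hacc : AccPt (0 : EuclideanSpace ℝ (Fin n)) (𝓟 (Gamma f \ Crit f)) :=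
    accPt_tangency_of_hasStrictFDerivAt (hasStrictFDerivAt_evalP f) hf0 hgrad
      (frequently_evalP_ne_zero hf 0)
  refine ⟨fun U hU => Set.Infinite.of_accPt (hacc.nhds_inter hU), ?_⟩
  rw [mem_closure_iff_frequently]
  exact (accPt_iff_frequently.1 hacc).mono fun x hx => ⟨hx.2, hx.1⟩
end
end

section
/- Let f ∈ ℝ[X₁,…,Xₙ] be a polynomial with f(0) = 0 and ∇f(0) = 0. Suppose 𝒭 > 0 satisfies Condition 1 and 0 < R < 𝒭. Then Γ_ℝ(f) ∩ B_R is connected. -/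
/-!
`Γ_ℝ(f)` is closed, so `K = Γ_ℝ(f) ∩ B_R` is compact and each connected component of `K` attains
its minimum of `‖·‖²`. At a minimiser `v ≠ 0`, Condition 1 gives a curve in `Γ_ℝ(f)` through `v`
along which `‖·‖²` has nonzero derivative; on the side where it decreases the curve stays in `K`,
hence in the component of `v`, contradicting minimality. So every component contains `0`.
-/

open MvPolynomial Metric Set

noncomputable section

/-- Condition 1 for the radius `sR`: for every nonzero `u ∈ Γ_ℝ(f)` with `‖u‖ < sR`,
there exist a neighborhood `O ⊆ B_sR` of `u`, reals `a < t̄ < b` and a differentiable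
map `φ : (a,b) → ℝⁿ` with `φ((a,b)) = Γ_ℝ(f) ∩ O`, `φ(t̄) = u`, and the derivative of
`t ↦ Σᵢ φᵢ(t)² = ‖φ(t)‖²` at `t̄` nonzero. -/
def Cond1 {n : ℕ} (f : MvPolynomial (Fin n) ℝ) (sR : ℝ) : Prop :=
  ∀ u ∈ Gamma f, u ≠ 0 → ‖u‖ < sR →
    ∃ (O : Set (EuclideanSpace ℝ (Fin n))) (a b tb : ℝ)
      (φ : ℝ → EuclideanSpace ℝ (Fin n)),
      O ∈ nhds u ∧ O ⊆ closedBall (0 : EuclideanSpace ℝ (Fin n)) sR ∧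
      a < tb ∧ tb < b ∧
      (∀ t ∈ Ioo a b, DifferentiableAt ℝ φ t) ∧
      φ '' Ioo a b = Gamma f ∩ O ∧ φ tb = u ∧
      deriv (fun t => ‖φ t‖ ^ 2) tb ≠ 0


open Filter Topology

lemma continuous_grad {n : ℕ} (f : MvPolynomial (Fin n) ℝ) : Continuous (grad f) :=
  (PiLp.continuous_toLp 2 _).comp <| continuous_pi fun _ =>
    (MvPolynomial.continuous_eval _).comp (continuous_pi fun j => PiLp.continuous_apply 2 _ j)

/-- Away from `0`, `F x` is a multiple of `x` iff `‖x‖² F x = ⟪F x, x⟫ x`, a closed condition. -/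
lemma isClosed_setOf_exists_eq_smul {E : Type*} [NormedAddCommGroup E] [InnerProductSpace ℝ E]
    {F : E → E} (hF : Continuous F) (hF0 : F 0 = 0) :
    IsClosed {x | ∃ l : ℝ, F x = l • x} := by
  have hset : {x | ∃ l : ℝ, F x = l • x} = {x | ‖x‖ ^ 2 • F x = inner ℝ (F x) x • x} := by
    ext x
    constructor
    · rintro ⟨l, hl⟩
      simp only [mem_ofPred_eq, hl, real_inner_smul_left, real_inner_self_eq_norm_sq, smul_smul,
        mul_comm]
    · intro hx
      rcases eq_or_ne x 0 with rfl | hx0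
      · exact ⟨0, by simp [hF0]⟩
      · refine ⟨inner ℝ (F x) x / ‖x‖ ^ 2, ?_⟩
        have hn : ‖x‖ ^ 2 ≠ 0 := pow_ne_zero 2 (norm_ne_zero_iff.mpr hx0)
        rw [div_eq_inv_mul, ← smul_smul, ← hx.out, smul_smul, inv_mul_cancel₀ hn, one_smul]
  rw [hset]
  exact isClosed_eq ((continuous_norm.pow 2).smul hF) ((hF.inner continuous_id).smul continuous_id)

lemma eventually_nhdsGT_lt_of_deriv_neg {h : ℝ → ℝ} {t : ℝ} (hd : deriv h t < 0) :
    ∀ᶠ s in 𝓝[>] t, h s < h t := by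
  have hslope : Tendsto (slope h t) (𝓝[>] t) (𝓝 (deriv h t)) :=
    (hasDerivAt_iff_tendsto_slope.mp (differentiableAt_of_deriv_ne_zero hd.ne).hasDerivAt
      ).mono_left (nhdsWithin_mono _ fun s hs => ne_of_gt hs)
  filter_upwards [hslope.eventually (eventually_lt_nhds hd), self_mem_nhdsWithin] with s hs hts
  rw [slope_def_field, div_neg_iff] at hs
  rcases hs with ⟨-, hst⟩ | ⟨hlt, -⟩ <;> linarith [mem_Ioi.mp hts]

lemma eventually_nhdsLT_lt_of_deriv_pos {h : ℝ → ℝ} {t : ℝ} (hd : 0 < deriv h t) :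
    ∀ᶠ s in 𝓝[<] t, h s < h t := by
  have hslope : Tendsto (slope h t) (𝓝[<] t) (𝓝 (deriv h t)) :=
    (hasDerivAt_iff_tendsto_slope.mp (differentiableAt_of_deriv_ne_zero hd.ne').hasDerivAt
      ).mono_left (nhdsWithin_mono _ fun s hs => ne_of_lt hs)
  filter_upwards [hslope.eventually (eventually_gt_nhds hd), self_mem_nhdsWithin] with s hs hts
  rw [slope_def_field, div_pos_iff] at hs
  rcases hs with ⟨-, hst⟩ | ⟨hlt, -⟩ <;> linarith [mem_Iio.mp hts]

/-- `J` is a half-open interval ending at `t`, on the side where `h` decreases. -/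
lemma exists_isPreconnected_lt_of_deriv_ne_zero {h : ℝ → ℝ} {t : ℝ} (hd : deriv h t ≠ 0)
    {U : Set ℝ} (hU : U ∈ 𝓝 t) :
    ∃ J ⊆ U, IsPreconnected J ∧ t ∈ J ∧ (∃ s ∈ J, h s < h t) ∧ ∀ s ∈ J, h s ≤ h t := by
  have htU := mem_of_mem_nhds hU
  rcases hd.lt_or_gt with hneg | hpos
  · obtain ⟨c, htc : t < c, hc⟩ := mem_nhdsGT_iff_exists_Ioo_subset.mp
      ((eventually_nhdsGT_lt_of_deriv_neg hneg).and (nhdsWithin_le_nhds hU))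
    refine ⟨insert t (Ioo t c), insert_subset htU fun s hs => (hc hs).2,
      Ioo_insert_left htc ▸ isPreconnected_Ico, mem_insert t _,
      ⟨(t + c) / 2, mem_insert_of_mem _ ⟨by linarith, by linarith⟩,
        (hc ⟨by linarith, by linarith⟩).1⟩,
      forall_mem_insert.mpr ⟨le_rfl, fun s hs => (hc hs).1.le⟩⟩
  · obtain ⟨c, hct : c < t, hc⟩ := mem_nhdsLT_iff_exists_Ioo_subset.mp
      ((eventually_nhdsLT_lt_of_deriv_pos hpos).and (nhdsWithin_le_nhds hU))
    refine ⟨insert t (Ioo c t), insert_subset htU fun s hs => (hc hs).2,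
      Ioo_insert_right hct ▸ isPreconnected_Ioc, mem_insert t _,
      ⟨(c + t) / 2, mem_insert_of_mem _ ⟨by linarith, by linarith⟩,
        (hc ⟨by linarith, by linarith⟩).1⟩,
      forall_mem_insert.mpr ⟨le_rfl, fun s hs => (hc hs).1.le⟩⟩

lemma IsClosed.isClosed_connectedComponentIn {X : Type*} [TopologicalSpace X] {K : Set X}
    (hK : IsClosed K) (x : X) : IsClosed (connectedComponentIn K x) := by
  rcases (connectedComponentIn K x).eq_empty_or_nonempty with hempty | ⟨y, hy⟩
  · exact hempty ▸ isClosed_empty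
  rw [connectedComponentIn_eq hy]
  exact isClosed_of_closure_subset <|
    isPreconnected_connectedComponentIn.closure.subset_connectedComponentIn
      (subset_closure (mem_connectedComponentIn (connectedComponentIn_subset K x hy)))
      (closure_minimal (connectedComponentIn_subset K y) hK)

/-- A minimiser of `g` on a component of `K` can only be `x₀`, so every component contains `x₀`. -/
lemma IsCompact.isConnected_of_forall_ne_exists_lt {X α : Type*} [TopologicalSpace X] [T2Space X]
    [LinearOrder α] [TopologicalSpace α] [ClosedIicTopology α] {K : Set X} (hK : IsCompact K)
    {g : X → α} (hg : ContinuousOn g K) {x₀ : X} (hx₀ : x₀ ∈ K)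
    (hdesc : ∀ v ∈ K, v ≠ x₀ → ∃ S ⊆ K, IsPreconnected S ∧ v ∈ S ∧ ∃ y ∈ S, g y < g v) :
    IsConnected K := by
  have hsub : K ⊆ connectedComponentIn K x₀ := by
    intro x hx
    have hCK : connectedComponentIn K x ⊆ K := connectedComponentIn_subset K x
    obtain ⟨v, hvC, hvmin⟩ :=
      (hK.of_isClosed_subset (hK.isClosed.isClosed_connectedComponentIn x) hCK).exists_isMinOn
        ⟨x, mem_connectedComponentIn hx⟩ (hg.mono hCK)
    obtain rfl : v = x₀ := by
      by_contra hne
      obtain ⟨S, hSK, hS, hvS, y, hyS, hy⟩ := hdesc v (hCK hvC) hne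
      have hSC : S ⊆ connectedComponentIn K x :=
        connectedComponentIn_eq hvC ▸ hS.subset_connectedComponentIn hvS hSK
      exact (hvmin (hSC hyS)).not_gt hy
    exact connectedComponentIn_eq hvC ▸ mem_connectedComponentIn hx
  have hcomp : connectedComponentIn K x₀ = K := (connectedComponentIn_subset K x₀).antisymm hsub
  exact hcomp ▸ isConnected_connectedComponentIn_iff.mpr hx₀

lemma Cond1.exists_isPreconnected_norm_sq_lt {n : ℕ} {f : MvPolynomial (Fin n) ℝ} {sR R : ℝ}
    (hcond : Cond1 f sR) (hRlt : R < sR) {v : EuclideanSpace ℝ (Fin n)}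
    (hv : v ∈ Gamma f ∩ closedBall 0 R) (hv0 : v ≠ 0) :
    ∃ S ⊆ Gamma f ∩ closedBall 0 R, IsPreconnected S ∧ v ∈ S ∧ ∃ y ∈ S, ‖y‖ ^ 2 < ‖v‖ ^ 2 := by
  have hvR : ‖v‖ ≤ R := mem_closedBall_zero_iff.mp hv.2
  obtain ⟨O, a, b, t, φ, -, -, hat, htb, hφ, hφim, rfl, hd⟩ :=
    hcond v hv.1 hv0 (hvR.trans_lt hRlt)
  obtain ⟨J, hJ, hJpre, htJ, ⟨s, hsJ, hs⟩, hle⟩ :=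
    exists_isPreconnected_lt_of_deriv_ne_zero hd (Ioo_mem_nhds hat htb)
  refine ⟨φ '' J, ?_, hJpre.image φ fun r hr => (hφ r (hJ hr)).continuousAt.continuousWithinAt,
    mem_image_of_mem φ htJ, φ s, mem_image_of_mem φ hsJ, hs⟩
  rintro _ ⟨r, hr, rfl⟩
  refine ⟨(hφim.subset (mem_image_of_mem φ (hJ hr))).1, mem_closedBall_zero_iff.mpr ?_⟩
  exact (pow_le_pow_iff_left₀ (norm_nonneg _) ((norm_nonneg _).trans hvR) two_ne_zero).mp
    ((hle r hr).trans (pow_le_pow_left₀ (norm_nonneg _) hvR 2))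

theorem stmt10_general (n : ℕ) (f : MvPolynomial (Fin n) ℝ)
    (hgrad : grad f 0 = 0)
    (sR : ℝ) (hcond : Cond1 f sR) (R : ℝ) (hR : 0 < R) (hRlt : R < sR) :
    IsConnected (Gamma f ∩ closedBall (0 : EuclideanSpace ℝ (Fin n)) R) := by
  have hΓ : IsClosed (Gamma f) := isClosed_setOf_exists_eq_smul (continuous_grad f) hgrad
  have h0 : (0 : EuclideanSpace ℝ (Fin n)) ∈ Gamma f := ⟨0, by simp [hgrad]⟩
  exact ((isCompact_closedBall 0 R).inter_left hΓ).isConnected_of_forall_ne_exists_lt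
    (g := fun x => ‖x‖ ^ 2) (by fun_prop) ⟨h0, mem_closedBall_self hR.le⟩
    fun v hv hv0 => hcond.exists_isPreconnected_norm_sq_lt hRlt hv hv0

/-- If `sR > 0` satisfies Condition 1 and `0 < R < sR`, then `Γ_ℝ(f) ∩ B_R` is
connected. -/
theorem stmt10 (n : ℕ) (f : MvPolynomial (Fin n) ℝ)
    (hf0 : evalP f 0 = 0) (hgrad : grad f 0 = 0)
    (sR : ℝ) (hsR : 0 < sR) (hcond : Cond1 f sR) (R : ℝ) (hR : 0 < R) (hRlt : R < sR) :
    IsConnected (Gamma f ∩ closedBall (0 : EuclideanSpace ℝ (Fin n)) R) :=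
  stmt10_general n f hgrad sR hcond R hR hRlt
end
end

section
/- Let f, g, h ∈ ℝ[X₁,…,Xₙ] with f = g·h², h not the zero polynomial, and suppose f(0) = 0 and ∇f(0) = 0. If g(0) = 0 and ∇g(0) ≠ 0, then 0 is a saddle point of f: every neighborhood of 0 in ℝⁿ contains points u and v with f(u) < 0 < f(v). -/
/-! Since `∂ᵢg(0) ≠ 0` for some `i`, the restriction of `g` to the `i`-th coordinate axis has
nonzero derivative at `0`, so `0` is not a local extremum of `g` and the open sets `{g < 0}` and
`{g > 0}` meet every neighbourhood of `0`. A nonzero polynomial is analytic on the connected space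
`ℝⁿ`, hence cannot vanish on a nonempty open set, so both sets contain points where `h ≠ 0`;
there `f = g·h²` has the sign of `g`. -/

open MvPolynomial Metric Set

noncomputable section

open Filter Topology

theorem Filter.Frequently.and_mem_of_dense {X : Type*} [TopologicalSpace X] {s D : Set X} {a : X}
    (h : ∃ᶠ x in 𝓝 a, x ∈ s) (hs : IsOpen s) (hD : Dense D) : ∃ᶠ x in 𝓝 a, x ∈ s ∧ x ∈ D := by
  rw [frequently_nhds_iff] at h ⊢
  intro U haU hU
  obtain ⟨y, hyU, hys⟩ := h U haU hU
  obtain ⟨x, ⟨hxU, hxs⟩, hxD⟩ := hD.inter_open_nonempty (U ∩ s) (hU.inter hs) ⟨y, hyU, hys⟩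
  exact ⟨x, hxU, hxs, hxD⟩

theorem MvPolynomial.hasDerivAt_eval_update {𝕜 σ : Type*} [NontriviallyNormedField 𝕜]
    [DecidableEq σ] (p : MvPolynomial σ 𝕜) (x : σ → 𝕜) (i : σ) (t : 𝕜) :
    HasDerivAt (fun s => eval (Function.update x i s) p)
      (eval (Function.update x i t) (pderiv i p)) t := by
  induction p using MvPolynomial.induction_on with
  | C a => simpa using hasDerivAt_const t a
  | add p q hp hq => simp only [map_add]; exact hp.add hq
  | mul_X p j hp =>
    simp only [map_mul, eval_X, pderiv_mul, map_add, pderiv_X]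
    by_cases hji : j = i
    · subst hji
      simpa using hp.fun_mul (hasDerivAt_id' t)
    · simpa [hji, Pi.single_eq_of_ne hji] using hp.mul_const (x j)

variable {n : ℕ}

theorem analyticOnNhd_evalP (p : MvPolynomial (Fin n) ℝ) : AnalyticOnNhd ℝ (evalP p) univ :=
  AnalyticOnNhd.eval_continuousLinearMap (𝕜 := ℝ)
    (PiLp.continuousLinearEquiv 2 ℝ (fun _ : Fin n => ℝ) :
      EuclideanSpace ℝ (Fin n) →L[ℝ] (Fin n → ℝ)) p

theorem continuous_evalP (p : MvPolynomial (Fin n) ℝ) : Continuous (evalP p) :=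
  (MvPolynomial.continuous_eval p).comp (PiLp.continuous_ofLp 2 _)

theorem dense_setOf_evalP_ne_zero {p : MvPolynomial (Fin n) ℝ} (hp : p ≠ 0) :
    Dense {x | evalP p x ≠ 0} := by
  refine dense_iff_inter_open.2 fun V hV ⟨z, hz⟩ => ?_
  by_contra! hzero
  have hEq : EqOn (evalP p) 0 univ :=
    (analyticOnNhd_evalP p).eqOn_zero_of_preconnected_of_eventuallyEq_zero
      isPreconnected_univ (mem_univ z)
      (eventually_of_mem (hV.mem_nhds hz) fun x hx => by_contra fun hne => hzero.subset ⟨hx, hne⟩)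
  exact hp <| MvPolynomial.funext fun x => by simpa [evalP] using hEq (mem_univ (WithLp.toLp 2 x))

theorem not_isLocalExtr_evalP_of_grad_ne_zero {g : MvPolynomial (Fin n) ℝ}
    {a : EuclideanSpace ℝ (Fin n)} (hg : grad g a ≠ 0) : ¬IsLocalExtr (evalP g) a := by
  obtain ⟨i, hi⟩ : ∃ i, eval (⇑a) (pderiv i g) ≠ 0 := by
    by_contra! h
    exact hg (by ext i; simpa [grad] using h i)
  intro hextr
  let line : ℝ → EuclideanSpace ℝ (Fin n) := fun t => WithLp.toLp 2 (Function.update (⇑a) i t)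
  have hline : line (a i) = a := by simp [line]
  rw [← hline] at hextr
  have hderiv := hasDerivAt_eval_update g (⇑a) i (a i)
  rw [Function.update_eq_self] at hderiv
  exact hi ((hextr.comp_continuous (PiLp.continuous_toLp 2 _ |>.comp
    (continuous_const.update i continuous_id)).continuousAt).hasDerivAt_eq_zero hderiv)

theorem stmt18_general (n : ℕ) (f g h : MvPolynomial (Fin n) ℝ) (hfgh : f = g * h ^ 2)
    (hh : h ≠ 0) (hg0 : evalP g 0 = 0) (hgradg : grad g 0 ≠ 0) :
    ∀ U ∈ nhds (0 : EuclideanSpace ℝ (Fin n)),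
      ∃ u ∈ U, ∃ v ∈ U, evalP f u < 0 ∧ 0 < evalP f v := by
  intro U hU
  have hf : ∀ x, evalP f x = evalP g x * evalP h x ^ 2 := by simp [evalP, hfgh]
  have hdense := dense_setOf_evalP_ne_zero hh
  obtain ⟨hmin, hmax⟩ := not_or.1 (not_isLocalExtr_evalP_of_grad_ne_zero hgradg)
  simp only [IsMinFilter, IsMaxFilter, hg0, not_eventually, not_le] at hmin hmax
  obtain ⟨u, huU, hgu, hhu⟩ := frequently_iff.1
    (hmin.and_mem_of_dense (isOpen_lt (continuous_evalP g) continuous_const) hdense) hU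
  obtain ⟨v, hvU, hgv, hhv⟩ := frequently_iff.1
    (hmax.and_mem_of_dense (isOpen_lt continuous_const (continuous_evalP g)) hdense) hU
  refine ⟨u, huU, v, hvU, ?_, ?_⟩ <;> rw [hf]
  · exact mul_neg_of_neg_of_pos hgu (pow_two_pos_of_ne_zero hhu)
  · exact mul_pos hgv (pow_two_pos_of_ne_zero hhv)

/-- Suppose `f = g·h²` with `h` not the zero polynomial, `f(0) = 0` and `∇f(0) = 0`.
If `g(0) = 0` and `∇g(0) ≠ 0`, then `0` is a saddle point of `f`: every neighborhood of
`0` contains points `u` and `v` with `f(u) < 0 < f(v)`. -/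
theorem stmt18 (n : ℕ) (f g h : MvPolynomial (Fin n) ℝ) (hfgh : f = g * h ^ 2)
    (hh : h ≠ 0) (hf0 : evalP f 0 = 0) (hgrad : grad f 0 = 0)
    (hg0 : evalP g 0 = 0) (hgradg : grad g 0 ≠ 0) :
    ∀ U ∈ nhds (0 : EuclideanSpace ℝ (Fin n)),
      ∃ u ∈ U, ∃ v ∈ U, evalP f u < 0 ∧ 0 < evalP f v :=
  stmt18_general n f g h hfgh hh hg0 hgradg
end
end
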